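/- arXiv:2605.10872 — 2 statements merged into one kernel-verified Lean document; each statement's English description precedes it below -/
import Mathlib

section
/- Let A, Q, X, Y be random variables on a common probability space, each taking finitely many values, and let Z = f(X) for some function f of the values of X. If H(A | ⟨Q, X⟩) = 0 and I(Y ; X | Q) = 0, then I(Y ; A | ⟨Q, Z⟩) = 0. -/
/-!
Since `H(A | (Q, X)) = 0` and `Z = f(X)`, the pair `(Z, A)` is a function of `(X, A)`, and
`I(Y ; A | (Q, X)) ≤ H(A | (Q, X)) = 0`. Chain rule, data processing and nonnegativity give
`I(Y ; A | (Q, Z)) ≤ I(Y ; (Z, A) | Q) ≤ I(Y ; (X, A) | Q) = I(Y ; X | Q) + I(Y ; A | (Q, X)) = 0`.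

Nonnegativity of `I(X ; Y | Z)` is Gibbs' inequality: it is the relative entropy of the law
`p(x, y, z)` of `(X, Y, Z)` with respect to `q(x, y, z) = p(x, z) p(y, z) / p(z)`, whose total
mass is at most that of `p`.
-/

open MeasureTheory

/-- Shannon entropy (in nats) of a random variable `X` taking finitely many values,
with the convention `0 log 0 = 0`. -/
noncomputable def entropy {Ω : Type*} [MeasurableSpace Ω] {S : Type*} [Fintype S]
    (μ : Measure Ω) (X : Ω → S) : ℝ :=
  -∑ s : S, (μ (X ⁻¹' {s})).toReal * Real.log (μ (X ⁻¹' {s})).toReal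

/-- Conditional entropy `H(X | Y)`, defined via the chain rule `H(X | Y) = H(X, Y) − H(Y)`. -/
noncomputable def condEntropy {Ω : Type*} [MeasurableSpace Ω] {S T : Type*} [Fintype S]
    [Fintype T] (μ : Measure Ω) (X : Ω → S) (Y : Ω → T) : ℝ :=
  entropy μ (fun ω => (X ω, Y ω)) - entropy μ Y

/-- Mutual information `I(X ; Y) = H(X) − H(X | Y)`. -/
noncomputable def mutualInfo {Ω : Type*} [MeasurableSpace Ω] {S T : Type*} [Fintype S]
    [Fintype T] (μ : Measure Ω) (X : Ω → S) (Y : Ω → T) : ℝ :=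
  entropy μ X - condEntropy μ X Y

/-- Conditional mutual information `I(X ; Y | Z) = H(X | Z) + H(Y | Z) − H(X, Y | Z)`. -/
noncomputable def condMutualInfo {Ω : Type*} [MeasurableSpace Ω] {S T U : Type*} [Fintype S]
    [Fintype T] [Fintype U] (μ : Measure Ω) (X : Ω → S) (Y : Ω → T) (Z : Ω → U) : ℝ :=
  condEntropy μ X Z + condEntropy μ Y Z - condEntropy μ (fun ω => (X ω, Y ω)) Z

open Finset Real

lemma mul_log_le_mul_log {p q : ℝ} (hp : 0 ≤ p) (hpq : p ≤ q) : p * log p ≤ p * log q := by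
  rcases hp.eq_or_lt with rfl | hp
  · simp
  · exact mul_le_mul_of_nonneg_left (log_le_log hp hpq) hp.le

lemma mul_log_le_mul_log_add_sub {p q : ℝ} (hp : 0 < p) (hq : 0 < q) :
    p * log q ≤ p * log p + (q - p) := by
  have h := log_le_sub_one_of_pos (div_pos hq hp)
  rw [log_div hq.ne' hp.ne'] at h
  have h' := mul_le_mul_of_nonneg_left h hp.le
  rw [mul_sub, mul_sub, mul_div_cancel₀ _ hp.ne'] at h'
  linarith

lemma sum_mul_log_le_sum_mul_log {ι : Type*} [Fintype ι] {p q : ι → ℝ} (hp : 0 ≤ p) (hq : 0 ≤ q)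
    (hpq : ∀ i, 0 < p i → 0 < q i) (hsum : ∑ i, q i ≤ ∑ i, p i) :
    ∑ i, p i * log (q i) ≤ ∑ i, p i * log (p i) := by
  have hterm : ∀ i, p i * log (q i) ≤ p i * log (p i) + (q i - p i) := fun i ↦ by
    rcases (hp i).eq_or_lt with h | h
    · simpa [← h] using hq i
    · exact mul_log_le_mul_log_add_sub h (hpq i h)
  calc ∑ i, p i * log (q i) ≤ ∑ i, (p i * log (p i) + (q i - p i)) := sum_le_sum fun i _ ↦ hterm i
    _ = ∑ i, p i * log (p i) + (∑ i, q i - ∑ i, p i) := by rw [sum_add_distrib, sum_sub_distrib]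
    _ ≤ ∑ i, p i * log (p i) := by linarith

section Law

variable {Ω S T : Type*} [MeasurableSpace Ω] {μ : Measure Ω}

lemma entropy_eq_neg_sum_measureReal [Fintype S] (X : Ω → S) :
    entropy μ X = -∑ s, μ.real (X ⁻¹' {s}) * log (μ.real (X ⁻¹' {s})) := rfl

variable [IsFiniteMeasure μ]

lemma measureReal_preimage_singleton_le_comp (X : Ω → S) (g : S → T) (s : S) :
    μ.real (X ⁻¹' {s}) ≤ μ.real ((fun ω ↦ g (X ω)) ⁻¹' {g s}) :=
  measureReal_mono fun ω hω ↦ by simp_all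

variable [Fintype S] [MeasurableSpace S] [MeasurableSingletonClass S] {X : Ω → S}

lemma sum_measureReal_preimage_singleton_univ (hX : Measurable X) :
    ∑ s, μ.real (X ⁻¹' {s}) = μ.real Set.univ := by
  rw [sum_measureReal_preimage_singleton _ fun s _ ↦ hX (measurableSet_singleton s)]
  simp

lemma measureReal_preimage_comp [DecidableEq T] (hX : Measurable X) (g : S → T) (t : T) :
    μ.real ((fun ω ↦ g (X ω)) ⁻¹' {t}) = ∑ s with g s = t, μ.real (X ⁻¹' {s}) := by
  rw [sum_measureReal_preimage_singleton _ fun s _ ↦ hX (measurableSet_singleton s)]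
  congr 1
  ext ω
  simp

variable [Fintype T]

lemma sum_measureReal_preimage_mul_comp (hX : Measurable X) (g : S → T) (F : T → ℝ) :
    ∑ s, μ.real (X ⁻¹' {s}) * F (g s) = ∑ t, μ.real ((fun ω ↦ g (X ω)) ⁻¹' {t}) * F t := by
  classical
  simp_rw [measureReal_preimage_comp hX, sum_mul]
  rw [← sum_fiberwise univ g]
  refine sum_congr rfl fun t _ ↦ sum_congr rfl fun s hs ↦ ?_
  rw [(mem_filter.1 hs).2]

lemma entropy_comp_le (hX : Measurable X) (g : S → T) :
    entropy μ (fun ω ↦ g (X ω)) ≤ entropy μ X := by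
  set q := fun t ↦ μ.real ((fun ω ↦ g (X ω)) ⁻¹' {t})
  rw [entropy_eq_neg_sum_measureReal, entropy_eq_neg_sum_measureReal,
    ← sum_measureReal_preimage_mul_comp hX g fun t ↦ log (q t)]
  exact neg_le_neg <| sum_le_sum fun s _ ↦
    mul_log_le_mul_log measureReal_nonneg (measureReal_preimage_singleton_le_comp X g s)

lemma entropy_comp_of_leftInverse [MeasurableSpace T] [MeasurableSingletonClass T]
    (hX : Measurable X) {f : S → T} {g : T → S} (hgf : Function.LeftInverse g f) :
    entropy μ (fun ω ↦ f (X ω)) = entropy μ X := by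
  refine (entropy_comp_le hX f).antisymm ?_
  have hfX : Measurable fun ω ↦ f (X ω) := (measurable_of_finite f).comp hX
  simpa only [hgf _] using entropy_comp_le (μ := μ) hfX g

end Law

section ConditionalMutualInformation

variable {Ω S T U V : Type*} [MeasurableSpace Ω] {μ : Measure Ω}

noncomputable def condIndepMass (μ : Measure Ω) (X : Ω → S) (Y : Ω → T) (Z : Ω → U)
    (x : (S × T) × U) : ℝ :=
  μ.real ((fun ω ↦ (X ω, Z ω)) ⁻¹' {(x.1.1, x.2)}) *
    (μ.real ((fun ω ↦ (Y ω, Z ω)) ⁻¹' {(x.1.2, x.2)}) / μ.real (Z ⁻¹' {x.2}))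

lemma condIndepMass_nonneg (X : Ω → S) (Y : Ω → T) (Z : Ω → U) :
    0 ≤ condIndepMass μ X Y Z := fun x ↦ by
  unfold condIndepMass
  positivity

variable [IsFiniteMeasure μ]

lemma measureReal_marginals_pos (X : Ω → S) (Y : Ω → T) (Z : Ω → U) (x : (S × T) × U)
    (hx : 0 < μ.real ((fun ω ↦ ((X ω, Y ω), Z ω)) ⁻¹' {x})) :
    0 < μ.real ((fun ω ↦ (X ω, Z ω)) ⁻¹' {(x.1.1, x.2)}) ∧
      0 < μ.real ((fun ω ↦ (Y ω, Z ω)) ⁻¹' {(x.1.2, x.2)}) ∧ 0 < μ.real (Z ⁻¹' {x.2}) := by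
  set J := fun ω ↦ ((X ω, Y ω), Z ω)
  exact ⟨hx.trans_le (measureReal_preimage_singleton_le_comp J (fun x ↦ (x.1.1, x.2)) x),
    hx.trans_le (measureReal_preimage_singleton_le_comp J (fun x ↦ (x.1.2, x.2)) x),
    hx.trans_le (measureReal_preimage_singleton_le_comp J Prod.snd x)⟩

lemma log_condIndepMass (X : Ω → S) (Y : Ω → T) (Z : Ω → U) (x : (S × T) × U)
    (hx : 0 < μ.real ((fun ω ↦ ((X ω, Y ω), Z ω)) ⁻¹' {x})) :
    log (condIndepMass μ X Y Z x) = log (μ.real ((fun ω ↦ (X ω, Z ω)) ⁻¹' {(x.1.1, x.2)}))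
      + log (μ.real ((fun ω ↦ (Y ω, Z ω)) ⁻¹' {(x.1.2, x.2)})) - log (μ.real (Z ⁻¹' {x.2})) := by
  obtain ⟨ha, hb, hc⟩ := measureReal_marginals_pos X Y Z x hx
  rw [condIndepMass, log_mul ha.ne' (div_pos hb hc).ne', log_div hb.ne' hc.ne', add_sub_assoc]

variable [Fintype S] [MeasurableSpace S] [MeasurableSingletonClass S]
  [Fintype T] [MeasurableSpace T] [MeasurableSingletonClass T]
  [Fintype U] [MeasurableSpace U] [MeasurableSingletonClass U]
  {X : Ω → S} {Y : Ω → T} {Z : Ω → U}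

lemma sum_condIndepMass_le (hX : Measurable X) (hY : Measurable Y) (hZ : Measurable Z) :
    ∑ x, condIndepMass μ X Y Z x ≤ μ.real Set.univ := by
  set a := fun y ↦ μ.real ((fun ω ↦ (X ω, Z ω)) ⁻¹' {y})
  set b := fun y ↦ μ.real ((fun ω ↦ (Y ω, Z ω)) ⁻¹' {y})
  set c := fun u ↦ μ.real (Z ⁻¹' {u})
  calc ∑ x, condIndepMass μ X Y Z x = ∑ y : S × U, a y * ∑ t, b (t, y.2) / c y.2 := by
        simp only [condIndepMass, Fintype.sum_prod_type, mul_sum]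
        exact sum_congr rfl fun _ _ ↦ sum_comm
    _ = ∑ u, c u * ∑ t, b (t, u) / c u :=
        sum_measureReal_preimage_mul_comp (hX.prodMk hZ) Prod.snd fun u ↦ ∑ t, b (t, u) / c u
    _ = ∑ u, ∑ t, b (t, u) * (c u / c u) := by
        refine sum_congr rfl fun u _ ↦ ?_
        rw [mul_sum]
        exact sum_congr rfl fun t _ ↦ by ring
    _ ≤ ∑ u, ∑ t, b (t, u) := by
        gcongr with u _ t _
        exact mul_le_of_le_one_right measureReal_nonneg (div_self_le_one _)
    _ = μ.real Set.univ := by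
        rw [sum_comm, ← Fintype.sum_prod_type']
        exact sum_measureReal_preimage_singleton_univ (hY.prodMk hZ)

lemma sum_mul_log_condIndepMass (hX : Measurable X) (hY : Measurable Y) (hZ : Measurable Z) :
    ∑ x, μ.real ((fun ω ↦ ((X ω, Y ω), Z ω)) ⁻¹' {x}) * log (condIndepMass μ X Y Z x)
      = entropy μ Z - entropy μ (fun ω ↦ (X ω, Z ω)) - entropy μ (fun ω ↦ (Y ω, Z ω)) := by
  set J := fun ω ↦ ((X ω, Y ω), Z ω)
  have hJ : Measurable J := (hX.prodMk hY).prodMk hZ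
  set a := fun y ↦ μ.real ((fun ω ↦ (X ω, Z ω)) ⁻¹' {y})
  set b := fun y ↦ μ.real ((fun ω ↦ (Y ω, Z ω)) ⁻¹' {y})
  set c := fun u ↦ μ.real (Z ⁻¹' {u})
  have hsplit : ∀ x, μ.real (J ⁻¹' {x}) * log (condIndepMass μ X Y Z x)
      = μ.real (J ⁻¹' {x}) * log (a (x.1.1, x.2)) + μ.real (J ⁻¹' {x}) * log (b (x.1.2, x.2))
        - μ.real (J ⁻¹' {x}) * log (c x.2) := fun x ↦ by
    rcases (measureReal_nonneg (μ := μ) (s := J ⁻¹' {x})).eq_or_lt with h | h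
    · simp [← h]
    · rw [log_condIndepMass X Y Z x h]
      ring
  have ha : ∑ x, μ.real (J ⁻¹' {x}) * log (a (x.1.1, x.2)) = ∑ y, a y * log (a y) :=
    sum_measureReal_preimage_mul_comp hJ (fun x ↦ (x.1.1, x.2)) fun y ↦ log (a y)
  have hb : ∑ x, μ.real (J ⁻¹' {x}) * log (b (x.1.2, x.2)) = ∑ y, b y * log (b y) :=
    sum_measureReal_preimage_mul_comp hJ (fun x ↦ (x.1.2, x.2)) fun y ↦ log (b y)
  have hc : ∑ x, μ.real (J ⁻¹' {x}) * log (c x.2) = ∑ u, c u * log (c u) :=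
    sum_measureReal_preimage_mul_comp hJ Prod.snd fun u ↦ log (c u)
  simp only [hsplit, sum_add_distrib, sum_sub_distrib, ha, hb, hc, entropy_eq_neg_sum_measureReal]
  ring

variable [Fintype V] [MeasurableSpace V] [MeasurableSingletonClass V] {W : Ω → V}

lemma condMutualInfo_nonneg (hX : Measurable X) (hY : Measurable Y) (hZ : Measurable Z) :
    0 ≤ condMutualInfo μ X Y Z := by
  have hJ : Measurable fun ω ↦ ((X ω, Y ω), Z ω) := (hX.prodMk hY).prodMk hZ
  have gibbs := sum_mul_log_le_sum_mul_log (fun _ ↦ measureReal_nonneg)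
    (condIndepMass_nonneg X Y Z) (fun x hx ↦ by
      obtain ⟨ha, hb, hc⟩ := measureReal_marginals_pos X Y Z x hx
      exact mul_pos ha (div_pos hb hc))
    ((sum_condIndepMass_le (μ := μ) hX hY hZ).trans_eq
      (sum_measureReal_preimage_singleton_univ hJ).symm)
  rw [sum_mul_log_condIndepMass hX hY hZ,
    ← neg_neg (∑ x, _), ← entropy_eq_neg_sum_measureReal] at gibbs
  simp only [condMutualInfo, condEntropy]
  linarith

lemma condMutualInfo_le_condEntropy (hX : Measurable X) (hY : Measurable Y) (hZ : Measurable Z) :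
    condMutualInfo μ X Y Z ≤ condEntropy μ Y Z := by
  have h := entropy_comp_le (μ := μ) ((hX.prodMk hY).prodMk hZ) fun x ↦ (x.1.1, x.2)
  simp only [condMutualInfo, condEntropy]
  linarith

lemma condMutualInfo_prod_right (hX : Measurable X) (hY : Measurable Y) (hZ : Measurable Z)
    (hW : Measurable W) :
    condMutualInfo μ X (fun ω ↦ (Y ω, Z ω)) W
      = condMutualInfo μ X Y W + condMutualInfo μ X Z (fun ω ↦ (W ω, Y ω)) := by
  have e₁ : entropy μ (fun ω ↦ (X ω, (W ω, Y ω))) = entropy μ (fun ω ↦ ((X ω, Y ω), W ω)) :=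
    entropy_comp_of_leftInverse (X := fun ω ↦ ((X ω, Y ω), W ω)) (by fun_prop)
      (f := fun x ↦ (x.1.1, (x.2, x.1.2))) (g := fun x ↦ ((x.1, x.2.2), x.2.1)) fun _ ↦ rfl
  have e₂ : entropy μ (fun ω ↦ (Z ω, (W ω, Y ω))) = entropy μ (fun ω ↦ ((Y ω, Z ω), W ω)) :=
    entropy_comp_of_leftInverse (X := fun ω ↦ ((Y ω, Z ω), W ω)) (by fun_prop)
      (f := fun x ↦ (x.1.2, (x.2, x.1.1))) (g := fun x ↦ ((x.2.2, x.1), x.2.1)) fun _ ↦ rfl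
  have e₃ : entropy μ (fun ω ↦ (W ω, Y ω)) = entropy μ (fun ω ↦ (Y ω, W ω)) :=
    entropy_comp_of_leftInverse (X := fun ω ↦ (Y ω, W ω)) (by fun_prop)
      (f := Prod.swap) (g := Prod.swap) fun _ ↦ rfl
  have e₄ : entropy μ (fun ω ↦ ((X ω, Z ω), (W ω, Y ω)))
      = entropy μ (fun ω ↦ ((X ω, (Y ω, Z ω)), W ω)) :=
    entropy_comp_of_leftInverse (X := fun ω ↦ ((X ω, (Y ω, Z ω)), W ω)) (by fun_prop)
      (f := fun x ↦ ((x.1.1, x.1.2.2), (x.2, x.1.2.1)))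
      (g := fun x ↦ ((x.1.1, (x.2.2, x.1.2)), x.2.1)) fun _ ↦ rfl
  simp only [condMutualInfo, condEntropy]
  linarith

lemma condMutualInfo_comp_right_le (hX : Measurable X) (hY : Measurable Y) (hZ : Measurable Z)
    (g : T → V) : condMutualInfo μ X (fun ω ↦ g (Y ω)) Z ≤ condMutualInfo μ X Y Z := by
  have hgY : Measurable fun ω ↦ g (Y ω) := (measurable_of_finite g).comp hY
  have chain := condMutualInfo_prod_right (μ := μ) hX hgY hY hZ
  have nonneg := condMutualInfo_nonneg (μ := μ) hX hY (hZ.prodMk hgY)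
  have e₁ : entropy μ (fun ω ↦ ((g (Y ω), Y ω), Z ω)) = entropy μ (fun ω ↦ (Y ω, Z ω)) :=
    entropy_comp_of_leftInverse (X := fun ω ↦ (Y ω, Z ω)) (by fun_prop)
      (f := fun x ↦ ((g x.1, x.1), x.2)) (g := fun x ↦ (x.1.2, x.2)) fun _ ↦ rfl
  have e₂ : entropy μ (fun ω ↦ ((X ω, (g (Y ω), Y ω)), Z ω))
      = entropy μ (fun ω ↦ ((X ω, Y ω), Z ω)) :=
    entropy_comp_of_leftInverse (X := fun ω ↦ ((X ω, Y ω), Z ω)) (by fun_prop)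
      (f := fun x ↦ ((x.1.1, (g x.1.2, x.1.2)), x.2)) (g := fun x ↦ ((x.1.1, x.1.2.2), x.2))
      fun _ ↦ rfl
  simp only [condMutualInfo, condEntropy] at chain nonneg ⊢
  linarith

end ConditionalMutualInformation

/-- If `A, Q, X, Y` are finite-valued random variables, `Z = f(X)`,
`H(A | (Q, X)) = 0` and `I(Y ; X | Q) = 0`, then `I(Y ; A | (Q, Z)) = 0`. -/
theorem stmt_7 {Ω : Type*} [MeasurableSpace Ω] (μ : Measure Ω) [IsProbabilityMeasure μ]
    {α β γ δ ε : Type*} [Fintype α] [Fintype β] [Fintype γ] [Fintype δ] [Fintype ε]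
    [MeasurableSpace α] [MeasurableSingletonClass α]
    [MeasurableSpace β] [MeasurableSingletonClass β]
    [MeasurableSpace γ] [MeasurableSingletonClass γ]
    [MeasurableSpace δ] [MeasurableSingletonClass δ]
    [MeasurableSpace ε] [MeasurableSingletonClass ε]
    (A : Ω → α) (Q : Ω → β) (X : Ω → γ) (Y : Ω → δ) (f : γ → ε)
    (hA : Measurable A) (hQ : Measurable Q) (hX : Measurable X) (hY : Measurable Y)
    (h1 : condEntropy μ A (fun ω => (Q ω, X ω)) = 0)
    (h2 : condMutualInfo μ Y X Q = 0) :
    condMutualInfo μ Y A (fun ω => (Q ω, f (X ω))) = 0 := by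
  have hfX : Measurable fun ω ↦ f (X ω) := (measurable_of_finite f).comp hX
  refine le_antisymm ?_ (condMutualInfo_nonneg hY hA (hQ.prodMk hfX))
  calc condMutualInfo μ Y A (fun ω ↦ (Q ω, f (X ω)))
      ≤ condMutualInfo μ Y (fun ω ↦ (f (X ω), A ω)) Q := by
        rw [condMutualInfo_prod_right hY hfX hA hQ]
        exact le_add_of_nonneg_left (condMutualInfo_nonneg hY hfX hQ)
    _ ≤ condMutualInfo μ Y (fun ω ↦ (X ω, A ω)) Q :=
        condMutualInfo_comp_right_le hY (hX.prodMk hA) hQ fun x ↦ (f x.1, x.2)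
    _ = condMutualInfo μ Y A (fun ω ↦ (Q ω, X ω)) := by
        rw [condMutualInfo_prod_right hY hX hA hQ, h2, zero_add]
    _ ≤ condEntropy μ A (fun ω ↦ (Q ω, X ω)) :=
        condMutualInfo_le_condEntropy hY hA (hQ.prodMk hX)
    _ = 0 := h1
end

section
/- Let A, Q, X, Y be random variables on a common probability space, each taking finitely many values, and let Q' = g(Q) for some function g of the values of Q. If H(A | ⟨X, Q'⟩) = 0 and I(⟨X, Y⟩ ; Q) = 0, then H(A | ⟨Y, Q'⟩) = H(A | ⟨Y, Q⟩). -/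
/-!
Since `Q' = g(Q)` is a function of `Q`, conditioning on `⟨Y, Q⟩` can only lower the entropy of
`A` compared with conditioning on `⟨Y, Q'⟩`. Conversely, `A` is determined by `⟨X, Y, Q'⟩`, so by
data processing `I(A ; Q | Y, Q') ≤ I(X ; Q | Y, Q')`, and the latter vanishes because `Q` is
independent of `⟨X, Y⟩`: `H(X | Y, Q') ≤ H(X | Y) = H(X | Y, Q)`.

Every information inequality used reduces to submodularity of entropy, which is Gibbs'
inequality `log x ≤ x - 1` applied on each fibre of the conditioning variable.
-/

open MeasureTheory

open Real Finset

namespace Real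

lemma negMulLog_add_le {x y : ℝ} (hx : 0 ≤ x) (hy : 0 ≤ y) :
    negMulLog (x + y) ≤ negMulLog x + negMulLog y := by
  rcases hx.eq_or_lt with rfl | hx
  · simp
  rcases hy.eq_or_lt with rfl | hy
  · simp
  have hlx : log x ≤ log (x + y) := log_le_log hx (by linarith)
  have hly : log y ≤ log (x + y) := log_le_log hy (by linarith)
  simp only [negMulLog, neg_mul, add_mul]
  nlinarith

lemma negMulLog_sum_le {ι : Type*} (s : Finset ι) {f : ι → ℝ} (hf : ∀ i ∈ s, 0 ≤ f i) :
    negMulLog (∑ i ∈ s, f i) ≤ ∑ i ∈ s, negMulLog (f i) :=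
  Finset.le_sum_of_subadditive_on_pred negMulLog (0 ≤ ·) (by simp)
    (fun _ _ => negMulLog_add_le) (fun _ _ => add_nonneg) f hf

/-- `log x ≤ x - 1` at `x = b c / (a d)`. -/
lemma mul_log_mul_le {a b c d : ℝ} (ha : 0 ≤ a) (hab : a ≤ b) (hac : a ≤ c) (had : a ≤ d) :
    a * log b + a * log c - a * log a - a * log d ≤ b * c / d - a := by
  rcases ha.eq_or_lt with rfl | ha
  · simp only [zero_mul, sub_zero]
    have : 0 ≤ b * c / d := by positivity
    linarith
  have hb : 0 < b := ha.trans_le hab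
  have hc : 0 < c := ha.trans_le hac
  have hd : 0 < d := ha.trans_le had
  have key := mul_le_mul_of_nonneg_left (log_le_sub_one_of_pos (x := b * c / (a * d))
    (by positivity)) ha.le
  rw [log_div (by positivity) (by positivity), log_mul hb.ne' hc.ne', log_mul ha.ne' hd.ne']
    at key
  calc _ = a * (log b + log c - (log a + log d)) := by ring
    _ ≤ a * (b * c / (a * d) - 1) := key
    _ = b * c / d - a := by field_simp

lemma sum_negMulLog_add_negMulLog_sum_le {R S : Type*} [Fintype R] [Fintype S]
    {a : R → S → ℝ} (ha : ∀ r s, 0 ≤ a r s) :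
    ∑ r, ∑ s, negMulLog (a r s) + negMulLog (∑ r, ∑ s, a r s) ≤
      ∑ r, negMulLog (∑ s, a r s) + ∑ s, negMulLog (∑ r, a r s) := by
  set b := fun r => ∑ s, a r s
  set c := fun s => ∑ r, a r s
  set d := ∑ r, ∑ s, a r s
  have hc_sum : ∑ s, c s = d := Finset.sum_comm
  have hab : ∀ r s, a r s ≤ b r := fun r s => single_le_sum (fun s _ => ha r s) (mem_univ s)
  have hac : ∀ r s, a r s ≤ c s := fun r s => single_le_sum (fun r _ => ha r s) (mem_univ r)
  have hbd : ∀ r, b r ≤ d := fun r =>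
    single_le_sum (fun r _ => sum_nonneg fun s _ => ha r s) (mem_univ r)
  have gibbs : ∑ r, ∑ s, (a r s * log (b r) + a r s * log (c s) - a r s * log (a r s)
      - a r s * log d) ≤ ∑ r, ∑ s, (b r * c s / d - a r s) :=
    sum_le_sum fun r _ => sum_le_sum fun s _ => mul_log_mul_le (ha r s) (hab r s) (hac r s)
      ((hab r s).trans (hbd r))
  have hbc : ∑ r, ∑ s, b r * c s / d = d := by
    simp_rw [← sum_div, ← mul_sum, ← sum_mul, hc_sum]
    exact mul_self_div_self d
  have hb_log : ∑ r, ∑ s, a r s * log (b r) = ∑ r, b r * log (b r) := by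
    simp_rw [← sum_mul]; rfl
  have hc_log : ∑ r, ∑ s, a r s * log (c s) = ∑ s, c s * log (c s) := by
    rw [sum_comm]; simp_rw [← sum_mul]; rfl
  have hd_log : ∑ r, ∑ s, a r s * log d = d * log d := by simp_rw [← sum_mul]; rfl
  simp only [sum_sub_distrib, sum_add_distrib, hbc, hb_log, hc_log, hd_log] at gibbs
  simp only [negMulLog, neg_mul, sum_neg_distrib]
  linarith

end Real

lemma Set.preimage_pair_singleton {α β γ : Type*} (f : α → β) (g : α → γ) (b : β) (c : γ) :
    (fun a => (f a, g a)) ⁻¹' {(b, c)} = f ⁻¹' {b} ∩ g ⁻¹' {c} := by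
  rw [← Set.singleton_prod_singleton, Set.mk_preimage_prod]

section Shannon

variable {Ω : Type*} [MeasurableSpace Ω] (μ : Measure Ω)
  {S T U : Type*} [Fintype S] [Fintype T] [Fintype U]

lemma entropy_eq_sum_negMulLog (X : Ω → S) :
    entropy μ X = ∑ s, negMulLog (μ.real (X ⁻¹' {s})) := by
  simp only [entropy, negMulLog, neg_mul, sum_neg_distrib, measureReal_def]

lemma entropy_comp_of_injective {e : S → T} (he : Function.Injective e) (X : Ω → S) :
    entropy μ (fun ω => e (X ω)) = entropy μ X := by
  rw [entropy_eq_sum_negMulLog, entropy_eq_sum_negMulLog]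
  refine (Fintype.sum_of_injective e he _ _ (fun t ht => ?_) fun s => ?_).symm
  · have : (fun ω => e (X ω)) ⁻¹' {t} = ∅ :=
      Set.eq_empty_of_forall_notMem fun ω h => ht ⟨X ω, h⟩
    simp [this]
  · congr 2
    ext ω
    simp [he.eq_iff]

variable {μ} [MeasurableSpace T] [MeasurableSingletonClass T]

lemma entropy_pair_eq_sum_restrict {X : Ω → S} {Y : Ω → T} (hY : Measurable Y) :
    entropy μ (fun ω => (X ω, Y ω)) = ∑ t, entropy (μ.restrict (Y ⁻¹' {t})) X := by
  simp only [entropy_eq_sum_negMulLog, Set.preimage_pair_singleton, Fintype.sum_prod_type_right,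
    measureReal_restrict_apply' (hY (measurableSet_singleton _))]

variable [MeasurableSpace S] [MeasurableSingletonClass S]
  [MeasurableSpace U] [MeasurableSingletonClass U]

lemma sum_measureReal_inter_preimage [IsFiniteMeasure μ] {E : Set Ω} {X : Ω → S}
    (hE : MeasurableSet E) (hX : Measurable X) :
    ∑ s, μ.real (E ∩ X ⁻¹' {s}) = μ.real E := by
  have := sum_measureReal_preimage_singleton (μ := μ.restrict E) univ
    (fun s _ => hX (measurableSet_singleton s))
  simpa [measureReal_restrict_apply' hE, Set.inter_comm] using this

lemma sum_measureReal_preimage [IsFiniteMeasure μ] {X : Ω → S} (hX : Measurable X) :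
    ∑ s, μ.real (X ⁻¹' {s}) = μ.real Set.univ := by
  simpa using sum_measureReal_inter_preimage (μ := μ) MeasurableSet.univ hX

lemma negMulLog_measureReal_univ_le_entropy [IsFiniteMeasure μ] {X : Ω → S}
    (hX : Measurable X) : negMulLog (μ.real Set.univ) ≤ entropy μ X := by
  rw [entropy_eq_sum_negMulLog, ← sum_measureReal_preimage hX]
  exact negMulLog_sum_le _ fun _ _ => measureReal_nonneg

lemma entropy_pair_add_negMulLog_le [IsFiniteMeasure μ] {X : Ω → S} {Y : Ω → T}
    (hX : Measurable X) (hY : Measurable Y) :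
    entropy μ (fun ω => (X ω, Y ω)) + negMulLog (μ.real Set.univ) ≤
      entropy μ X + entropy μ Y := by
  have key := sum_negMulLog_add_negMulLog_sum_le
    (a := fun s t => μ.real (X ⁻¹' {s} ∩ Y ⁻¹' {t})) fun _ _ => measureReal_nonneg
  have hrow : ∀ s, ∑ t, μ.real (X ⁻¹' {s} ∩ Y ⁻¹' {t}) = μ.real (X ⁻¹' {s}) := fun s =>
    sum_measureReal_inter_preimage (hX (measurableSet_singleton s)) hY
  have hcol : ∀ t, ∑ s, μ.real (X ⁻¹' {s} ∩ Y ⁻¹' {t}) = μ.real (Y ⁻¹' {t}) := fun t => by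
    simpa only [Set.inter_comm] using
      sum_measureReal_inter_preimage (hY (measurableSet_singleton t)) hX
  simp only [hrow, hcol, sum_measureReal_preimage hX] at key
  simpa only [entropy_eq_sum_negMulLog, Set.preimage_pair_singleton, Fintype.sum_prod_type]
    using key

lemma entropy_le_entropy_pair [IsFiniteMeasure μ] {X : Ω → S} {Y : Ω → T}
    (hX : Measurable X) (hY : Measurable Y) :
    entropy μ Y ≤ entropy μ (fun ω => (X ω, Y ω)) := by
  rw [entropy_pair_eq_sum_restrict hY, entropy_eq_sum_negMulLog]
  refine sum_le_sum fun t _ => ?_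
  simpa using negMulLog_measureReal_univ_le_entropy (μ := μ.restrict (Y ⁻¹' {t})) hX

lemma entropy_pair_le_add [IsProbabilityMeasure μ] {X : Ω → S} {Y : Ω → T}
    (hX : Measurable X) (hY : Measurable Y) :
    entropy μ (fun ω => (X ω, Y ω)) ≤ entropy μ X + entropy μ Y := by
  simpa using entropy_pair_add_negMulLog_le (μ := μ) hX hY

lemma entropy_submodular [IsFiniteMeasure μ] {X : Ω → S} {Y : Ω → T} {Z : Ω → U}
    (hX : Measurable X) (hY : Measurable Y) (hZ : Measurable Z) :
    entropy μ (fun ω => ((X ω, Y ω), Z ω)) + entropy μ Z ≤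
      entropy μ (fun ω => (X ω, Z ω)) + entropy μ (fun ω => (Y ω, Z ω)) := by
  rw [entropy_pair_eq_sum_restrict hZ, entropy_pair_eq_sum_restrict hZ,
    entropy_pair_eq_sum_restrict hZ, entropy_eq_sum_negMulLog, ← sum_add_distrib,
    ← sum_add_distrib]
  refine sum_le_sum fun u _ => ?_
  simpa using entropy_pair_add_negMulLog_le (μ := μ.restrict (Z ⁻¹' {u})) hX hY

lemma condEntropy_nonneg [IsFiniteMeasure μ] {X : Ω → S} {Y : Ω → T} (hX : Measurable X)
    (hY : Measurable Y) :
    0 ≤ condEntropy μ X Y :=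
  sub_nonneg.2 (entropy_le_entropy_pair hX hY)

lemma condEntropy_le_condEntropy_comp [IsFiniteMeasure μ] {X : Ω → S} {Z : Ω → T}
    (hX : Measurable X) (hZ : Measurable Z) (f : T → U) :
    condEntropy μ X Z ≤ condEntropy μ X (fun ω => f (Z ω)) := by
  have hfZ : Measurable fun ω => f (Z ω) := (measurable_of_countable f).comp hZ
  have h_sub := entropy_submodular (μ := μ) hX hZ hfZ
  have h_XZ : entropy μ (fun ω => ((X ω, Z ω), f (Z ω))) = entropy μ (fun ω => (X ω, Z ω)) :=
    entropy_comp_of_injective μ (e := fun p : S × T => (p, f p.2))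
      (fun _ _ h => congrArg Prod.fst h) fun ω => (X ω, Z ω)
  have h_Z : entropy μ (fun ω => (Z ω, f (Z ω))) = entropy μ Z :=
    entropy_comp_of_injective μ (e := fun z => (z, f z)) (fun _ _ h => congrArg Prod.fst h) Z
  simp only [condEntropy]
  linarith

lemma condEntropy_pair_eq_of_mutualInfo_eq_zero [IsProbabilityMeasure μ] {X : Ω → S}
    {Y : Ω → T} {Q : Ω → U} (hX : Measurable X) (hY : Measurable Y) (hQ : Measurable Q)
    (h : mutualInfo μ (fun ω => (X ω, Y ω)) Q = 0) :
    condEntropy μ X (fun ω => (Y ω, Q ω)) = condEntropy μ X Y := by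
  refine le_antisymm (condEntropy_le_condEntropy_comp hX (hY.prodMk hQ) Prod.fst) ?_
  have h_assoc : entropy μ (fun ω => ((X ω, Y ω), Q ω)) =
      entropy μ (fun ω => (X ω, (Y ω, Q ω))) :=
    entropy_comp_of_injective μ (e := fun p : S × T × U => ((p.1, p.2.1), p.2.2))
      (fun _ _ h => by simp_all [Prod.ext_iff]) fun ω => (X ω, Y ω, Q ω)
  have h_sub := entropy_pair_le_add (μ := μ) hY hQ
  simp only [mutualInfo, condEntropy] at h ⊢
  linarith

/-- Data processing: when `A` is determined by `X` and `W = f(Z)`, the information `A` carries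
about `Z` beyond `W` is at most that carried by `X`. -/
lemma condEntropy_comp_sub_le_of_condEntropy_eq_zero [IsFiniteMeasure μ] {A : Ω → S}
    {X : Ω → T} {Z : Ω → U} {V : Type*} [Fintype V] [MeasurableSpace V] [MeasurableSingletonClass V]
    (hA : Measurable A) (hX : Measurable X) (hZ : Measurable Z) (f : U → V)
    (h : condEntropy μ A (fun ω => (X ω, f (Z ω))) = 0) :
    condEntropy μ A (fun ω => f (Z ω)) - condEntropy μ A Z ≤
      condEntropy μ X (fun ω => f (Z ω)) - condEntropy μ X Z := by
  have hW : Measurable fun ω => f (Z ω) := (measurable_of_countable f).comp hZ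
  have h_sub := entropy_submodular (μ := μ) hX hZ (hA.prodMk hW)
  have h_mono := entropy_le_entropy_pair (μ := μ) hA (hX.prodMk hZ)
  have h_AZ : entropy μ (fun ω => (Z ω, (A ω, f (Z ω)))) = entropy μ (fun ω => (A ω, Z ω)) :=
    entropy_comp_of_injective μ (e := fun p : S × U => (p.2, (p.1, f p.2)))
      (fun _ _ h => by simp_all [Prod.ext_iff]) fun ω => (A ω, Z ω)
  have h_AXZ : entropy μ (fun ω => ((X ω, Z ω), (A ω, f (Z ω)))) =
      entropy μ (fun ω => (A ω, (X ω, Z ω))) :=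
    entropy_comp_of_injective μ (e := fun p : S × T × U => (p.2, (p.1, f p.2.2)))
      (fun _ _ h => by simp_all [Prod.ext_iff]) fun ω => (A ω, X ω, Z ω)
  have h_AXW : entropy μ (fun ω => (X ω, (A ω, f (Z ω)))) =
      entropy μ (fun ω => (A ω, (X ω, f (Z ω)))) :=
    entropy_comp_of_injective μ (e := fun p : S × T × V => (p.2.1, (p.1, p.2.2)))
      (fun _ _ h => by simp_all [Prod.ext_iff]) fun ω => (A ω, X ω, f (Z ω))
  simp only [condEntropy] at h ⊢
  linarith

end Shannon

/-- If `A, Q, X, Y` are finite-valued random variables, `Q' = g(Q)`,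
`H(A | (X, Q')) = 0` and `I((X, Y) ; Q) = 0`, then `H(A | (Y, Q')) = H(A | (Y, Q))`. -/
theorem stmt_9 {Ω : Type*} [MeasurableSpace Ω] (μ : Measure Ω) [IsProbabilityMeasure μ]
    {α β γ δ ε : Type*} [Fintype α] [Fintype β] [Fintype γ] [Fintype δ] [Fintype ε]
    [MeasurableSpace α] [MeasurableSingletonClass α]
    [MeasurableSpace β] [MeasurableSingletonClass β]
    [MeasurableSpace γ] [MeasurableSingletonClass γ]
    [MeasurableSpace δ] [MeasurableSingletonClass δ]
    [MeasurableSpace ε] [MeasurableSingletonClass ε]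
    (A : Ω → α) (Q : Ω → β) (X : Ω → γ) (Y : Ω → δ) (g : β → ε)
    (hA : Measurable A) (hQ : Measurable Q) (hX : Measurable X) (hY : Measurable Y)
    (h1 : condEntropy μ A (fun ω => (X ω, g (Q ω))) = 0)
    (h2 : mutualInfo μ (fun ω => (X ω, Y ω)) Q = 0) :
    condEntropy μ A (fun ω => (Y ω, g (Q ω))) = condEntropy μ A (fun ω => (Y ω, Q ω)) := by
  have hYQ := hY.prodMk hQ
  have hYG : Measurable fun ω => (Y ω, g (Q ω)) :=
    hY.prodMk ((measurable_of_countable g).comp hQ)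
  have hA_det : condEntropy μ A (fun ω => (X ω, (Y ω, g (Q ω)))) = 0 :=
    le_antisymm (h1 ▸ condEntropy_le_condEntropy_comp (μ := μ) hA (hX.prodMk hYG)
      fun p : γ × δ × ε => (p.1, p.2.2)) (condEntropy_nonneg hA (hX.prodMk hYG))
  have hX_indep : condEntropy μ X (fun ω => (Y ω, g (Q ω))) ≤
      condEntropy μ X (fun ω => (Y ω, Q ω)) := by
    rw [condEntropy_pair_eq_of_mutualInfo_eq_zero hX hY hQ h2]
    exact condEntropy_le_condEntropy_comp (μ := μ) hX hYG Prod.fst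
  have h_dp := condEntropy_comp_sub_le_of_condEntropy_eq_zero (μ := μ) hA hX hYQ
    (fun p => (p.1, g p.2)) hA_det
  have h_ge := condEntropy_le_condEntropy_comp (μ := μ) hA hYQ fun p => (p.1, g p.2)
  linarith
end
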